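/- Let K ∈ ℤ^{n×s} be a matrix all of whose entries are finite integers, let K = Im K ⊆ ℤ_max^n, and let A ∈ ℤ_max^{n×n}, B ∈ ℤ_max^{n×p}. Then the maximal geometrically (A,B)-invariant semimodule K* contained in K is finitely generated, and, defining X₁ = K and X_{r+1} = φ(X_r), there exists k ≤ (Δ_H(K)+1)^n − Δ_H(K)^n + 1 such that K* = X_k. -/

import Mathlib

/-- The max-plus matrix–vector product over `ℤ_max = (ℤ ∪ {−∞}, max, +)`:
`(Ax)_i = max_j (A_{ij} + x_j)`. -/
def maxMulVec {m k : ℕ} (A : Matrix (Fin m) (Fin k) (WithBot ℤ))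
    (x : Fin k → WithBot ℤ) : Fin m → WithBot ℤ :=
  fun i => Finset.univ.sup fun j => A i j + x j

/-- The max-plus matrix product: `(AB)_{ij} = max_t (A_{it} + B_{tj})`. -/
def maxMatMul {m k l : ℕ} (A : Matrix (Fin m) (Fin k) (WithBot ℤ))
    (B : Matrix (Fin k) (Fin l) (WithBot ℤ)) : Matrix (Fin m) (Fin l) (WithBot ℤ) :=
  Matrix.of fun i j => Finset.univ.sup fun t => A i t + B t j

/-- `Im A`: the subsemimodule generated by the columns of `A`, i.e. the set of all
max-plus linear combinations `Ay` of the columns of `A`. -/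
def ImM {m k : ℕ} (A : Matrix (Fin m) (Fin k) (WithBot ℤ)) : Set (Fin m → WithBot ℤ) :=
  {v | ∃ y : Fin k → WithBot ℤ, v = maxMulVec A y}

/-- A subsemimodule of `ℤ_max^m`: contains `(−∞,…,−∞)`, is closed under entrywise max,
and under addition of a scalar `λ ∈ ℤ ∪ {−∞}` to all entries. -/
def IsSubsemimodule {m : ℕ} (X : Set (Fin m → WithBot ℤ)) : Prop :=
  (fun _ => ⊥) ∈ X ∧ (∀ x ∈ X, ∀ y ∈ X, x ⊔ y ∈ X) ∧
    ∀ (c : WithBot ℤ), ∀ x ∈ X, (fun i => c + x i) ∈ X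

/-- The volume of a subset of `ℤ_max^m`: the cardinality (in `ℕ ∪ {∞}`) of the set
of its elements `x` with `max_i x_i = 0`. -/
noncomputable def vol {m : ℕ} (X : Set (Fin m → WithBot ℤ)) : ℕ∞ :=
  {x ∈ X | Finset.univ.sup x = (0 : WithBot ℤ)}.encard

/-- The subsemimodule of `ℤ_max^m` generated by a set `G`: all max-plus linear
combinations of finitely many elements of `G`. -/
def maxSpan {m : ℕ} (G : Set (Fin m → WithBot ℤ)) : Set (Fin m → WithBot ℤ) :=
  {x | ∃ (k : ℕ) (u : Fin k → Fin m → WithBot ℤ) (lam : Fin k → WithBot ℤ),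
    (∀ i, u i ∈ G) ∧ x = fun j => Finset.univ.sup fun i => lam i + u i j}

/-- `Kstar A B K`: the set of initial states `x₀` for which some control sequence
`u(k)`, `k ≥ 1`, makes the trajectory `x(0) = x₀`, `x(k) = max(A x(k−1), B u(k))`
stay in `K` forever. -/
def KstarMax {n p : ℕ} (A : Matrix (Fin n) (Fin n) (WithBot ℤ))
    (B : Matrix (Fin n) (Fin p) (WithBot ℤ)) (K : Set (Fin n → WithBot ℤ)) :
    Set (Fin n → WithBot ℤ) :=
  {x₀ | ∃ (u : ℕ → Fin p → WithBot ℤ) (x : ℕ → Fin n → WithBot ℤ),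
    x 0 = x₀ ∧ (∀ k : ℕ, x (k + 1) = maxMulVec A (x k) ⊔ maxMulVec B (u (k + 1))) ∧
    ∀ k : ℕ, x k ∈ K}

/-- `φ(X) = X ∩ A⁻¹(X ⊖ Im B)`, where `A⁻¹(Y) = {u : Au ∈ Y}` and
`Z ⊖ Y = {u : ∃ y ∈ Y, max(u, y) ∈ Z}`. -/
def PhiMax {n p : ℕ} (A : Matrix (Fin n) (Fin n) (WithBot ℤ))
    (B : Matrix (Fin n) (Fin p) (WithBot ℤ)) (X : Set (Fin n → WithBot ℤ)) :
    Set (Fin n → WithBot ℤ) :=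
  X ∩ {u | maxMulVec A u ∈ {w | ∃ y ∈ ImM B, w ⊔ y ∈ X}}

/-- The sequence `X₁ = K`, `X_{r+1} = φ(X_r)`; here `XseqMax A B K r` is `X_{r+1}`,
so that `XseqMax A B K 0 = X₁ = K` and `X_k = XseqMax A B K (k−1)` for `k ≥ 1`. -/
def XseqMax {n p : ℕ} (A : Matrix (Fin n) (Fin n) (WithBot ℤ))
    (B : Matrix (Fin n) (Fin p) (WithBot ℤ)) (K : Set (Fin n → WithBot ℤ)) :
    ℕ → Set (Fin n → WithBot ℤ)
  | 0 => K
  | r + 1 => PhiMax A B (XseqMax A B K r)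

/-- The additive Hilbert seminorm of `x ∈ ℤⁿ`: `‖x‖_H = max_i x_i − min_i x_i`
(a natural number since the max dominates the min). -/
def hilbertNorm {n : ℕ} [NeZero n] (x : Fin n → ℤ) : ℕ :=
  (Finset.univ.sup' Finset.univ_nonempty x - Finset.univ.inf' Finset.univ_nonempty x).toNat

/-- `Δ_H(K)`: the maximum of the Hilbert seminorms of the columns of `K ∈ ℤ^{n×s}`. -/
def deltaH {n s : ℕ} [NeZero n] [NeZero s] (K : Matrix (Fin n) (Fin s) ℤ) : ℕ :=
  Finset.univ.sup' Finset.univ_nonempty fun j => hilbertNorm fun i => K i j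

/-- A matrix with finite integer entries, viewed as a matrix over `ℤ_max`. -/
def toZmax {n s : ℕ} (K : Matrix (Fin n) (Fin s) ℤ) : Matrix (Fin n) (Fin s) (WithBot ℤ) :=
  Matrix.of fun i j => (K i j : WithBot ℤ)

/-!
For `x = K y` with `K` finite, `x_{i'} ≤ Δ_H(K) + x_i` for all `i, i'`, so the normalized
vectors of `Im K` (those with `max_i x_i = 0`) are integer vectors with entries in `[-Δ_H(K), 0]`
and some entry `0`: there are at most `(Δ_H(K)+1)^n − Δ_H(K)^n` of them. Every subsemimodule is
the span of its normalized vectors, so along the decreasing chain of subsemimodules `X_r` the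
normalized part shrinks strictly until the chain stabilizes, which must happen within that many
steps. A fixed point `X = φ(X)` inside `𝒦` is geometrically invariant, hence contained in `𝒦*`,
while `𝒦* ⊆ X_r` for every `r`; so `𝒦*` is that fixed point, spanned by its finitely many
normalized vectors.
-/

open Finset

theorem WithBot.add_finset_sup {α ι : Type*} [LinearOrder α] [Add α] [AddLeftMono α]
    (s : Finset ι) (a : WithBot α) (f : ι → WithBot α) :
    a + s.sup f = s.sup fun i => a + f i :=
  apply_sup_eq_sup_comp (a + ·) (fun b c => (max_add_add_left a b c).symm) (WithBot.add_bot a)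

theorem WithBot.coe_add_coe_neg_add {α : Type*} [AddGroup α] (c : α) (a : WithBot α) :
    (c : WithBot α) + ((-c : α) + a) = a := by
  rw [← add_assoc, ← WithBot.coe_add, add_neg_cancel, WithBot.coe_zero, zero_add]

theorem sup_coe_neg_add_eq_zero {ι : Type*} {s : Finset ι} {x : ι → WithBot ℤ} {c : ℤ}
    (h : s.sup x = c) : (s.sup fun i => ((-c : ℤ) : WithBot ℤ) + x i) = 0 := by
  rw [← WithBot.add_finset_sup, h, ← WithBot.coe_add, neg_add_cancel, WithBot.coe_zero]

section MaxMulVec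

variable {m k : ℕ} (M : Matrix (Fin m) (Fin k) (WithBot ℤ))

theorem maxMulVec_bot : maxMulVec M (fun _ => ⊥) = fun _ => ⊥ := by
  funext i; simp [maxMulVec]

theorem maxMulVec_sup (x y : Fin k → WithBot ℤ) :
    maxMulVec M (x ⊔ y) = maxMulVec M x ⊔ maxMulVec M y := by
  funext i
  simp only [maxMulVec, Pi.sup_apply, ← sup_sup]
  congr 1; funext j; exact (max_add_add_left _ _ _).symm

theorem maxMulVec_const_add (c : WithBot ℤ) (x : Fin k → WithBot ℤ) :
    maxMulVec M (fun j => c + x j) = fun i => c + maxMulVec M x i := by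
  funext i
  simp only [maxMulVec, WithBot.add_finset_sup, add_left_comm]

end MaxMulVec

/-- The set whose cardinality is `vol X`. -/
def normalizedPart {m : ℕ} (X : Set (Fin m → WithBot ℤ)) : Set (Fin m → WithBot ℤ) :=
  {x ∈ X | Finset.univ.sup x = (0 : WithBot ℤ)}

theorem normalizedPart_mono {m : ℕ} : Monotone (normalizedPart (m := m)) :=
  fun _ _ hXY _ hx => ⟨hXY hx.1, hx.2⟩

namespace IsSubsemimodule

variable {m : ℕ} {X Y : Set (Fin m → WithBot ℤ)}

theorem bot_mem (hX : IsSubsemimodule X) : (fun _ => ⊥) ∈ X := hX.1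

theorem sup_mem (hX : IsSubsemimodule X) {x y : Fin m → WithBot ℤ} (hx : x ∈ X) (hy : y ∈ X) :
    x ⊔ y ∈ X := hX.2.1 x hx y hy

theorem const_add_mem (hX : IsSubsemimodule X) (c : WithBot ℤ) {x : Fin m → WithBot ℤ}
    (hx : x ∈ X) : (fun i => c + x i) ∈ X := hX.2.2 c x hx

theorem maxSpan_subset (hX : IsSubsemimodule X) {G : Set (Fin m → WithBot ℤ)} (hG : G ⊆ X) :
    maxSpan G ⊆ X := by
  rintro _ ⟨k, u, lam, hu, rfl⟩
  induction (univ : Finset (Fin k)) using Finset.induction_on with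
  | empty => simpa using hX.bot_mem
  | insert a t _ ih =>
    simp only [sup_insert]
    exact hX.sup_mem (hX.const_add_mem _ (hG (hu a))) ih

theorem subset_maxSpan_normalizedPart (hX : IsSubsemimodule X) :
    X ⊆ maxSpan (normalizedPart X) := by
  intro x hx
  cases hs : univ.sup x with
  | bot =>
    refine ⟨0, Fin.elim0, Fin.elim0, fun i => i.elim0, funext fun i => ?_⟩
    simpa using (Finset.sup_eq_bot_iff _ _).1 hs i (mem_univ i)
  | coe c =>
    refine ⟨1, fun _ i => ((-c : ℤ) : WithBot ℤ) + x i, fun _ => c,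
      fun _ => ⟨hX.const_add_mem _ hx, sup_coe_neg_add_eq_zero hs⟩, funext fun i => ?_⟩
    simp [WithBot.coe_add_coe_neg_add]

theorem eq_maxSpan_normalizedPart (hX : IsSubsemimodule X) :
    X = maxSpan (normalizedPart X) :=
  hX.subset_maxSpan_normalizedPart.antisymm (hX.maxSpan_subset (Set.sep_subset _ _))

theorem subset_of_normalizedPart_subset (hX : IsSubsemimodule X) (hY : IsSubsemimodule Y)
    (h : normalizedPart X ⊆ Y) : X ⊆ Y :=
  hX.subset_maxSpan_normalizedPart.trans (hY.maxSpan_subset h)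

end IsSubsemimodule

theorem isSubsemimodule_imM {m k : ℕ} (M : Matrix (Fin m) (Fin k) (WithBot ℤ)) :
    IsSubsemimodule (ImM M) := by
  refine ⟨⟨fun _ => ⊥, (maxMulVec_bot M).symm⟩, ?_, ?_⟩
  · rintro _ ⟨y, rfl⟩ _ ⟨z, rfl⟩
    exact ⟨y ⊔ z, (maxMulVec_sup M y z).symm⟩
  · rintro c _ ⟨y, rfl⟩
    exact ⟨fun j => c + y j, (maxMulVec_const_add M c y).symm⟩

section Invariance

variable {n p : ℕ} (A : Matrix (Fin n) (Fin n) (WithBot ℤ)) (B : Matrix (Fin n) (Fin p) (WithBot ℤ))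

theorem IsSubsemimodule.phiMax {X : Set (Fin n → WithBot ℤ)} (hX : IsSubsemimodule X) :
    IsSubsemimodule (PhiMax A B X) := by
  have hB := isSubsemimodule_imM B
  refine ⟨⟨hX.bot_mem, fun _ => ⊥, hB.bot_mem, ?_⟩, ?_, ?_⟩
  · simpa [maxMulVec_bot] using hX.bot_mem
  · rintro x ⟨hx, y, hy, hxy⟩ z ⟨hz, w, hw, hzw⟩
    refine ⟨hX.sup_mem hx hz, y ⊔ w, hB.sup_mem hy hw, ?_⟩
    rw [maxMulVec_sup, sup_sup_sup_comm]
    exact hX.sup_mem hxy hzw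
  · rintro c x ⟨hx, y, hy, hxy⟩
    refine ⟨hX.const_add_mem c hx, fun i => c + y i, hB.const_add_mem c hy, ?_⟩
    convert hX.const_add_mem c hxy using 1
    rw [maxMulVec_const_add]
    exact funext fun i => max_add_add_left _ _ _

theorem IsSubsemimodule.xseqMax {K : Set (Fin n → WithBot ℤ)} (hK : IsSubsemimodule K) :
    ∀ r, IsSubsemimodule (XseqMax A B K r)
  | 0 => hK
  | r + 1 => (hK.xseqMax r).phiMax A B

theorem phiMax_subset (X : Set (Fin n → WithBot ℤ)) : PhiMax A B X ⊆ X :=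
  Set.inter_subset_left

theorem phiMax_mono : Monotone (PhiMax A B) := by
  rintro X Y hXY x ⟨hx, y, hy, hxy⟩
  exact ⟨hXY hx, y, hy, hXY hxy⟩

theorem xseqMax_antitone (K : Set (Fin n → WithBot ℤ)) : Antitone (XseqMax A B K) :=
  antitone_nat_of_succ_le fun _ => phiMax_subset A B _

theorem xseqMax_subset (K : Set (Fin n → WithBot ℤ)) (r : ℕ) : XseqMax A B K r ⊆ K :=
  xseqMax_antitone A B K (Nat.zero_le r)

theorem kstarMax_subset (K : Set (Fin n → WithBot ℤ)) : KstarMax A B K ⊆ K := by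
  rintro _ ⟨u, x, rfl, -, hK⟩
  exact hK 0

theorem kstarMax_subset_phiMax (K : Set (Fin n → WithBot ℤ)) :
    KstarMax A B K ⊆ PhiMax A B (KstarMax A B K) := by
  rintro _ hx₀
  obtain ⟨u, x, rfl, hrec, hK⟩ := id hx₀
  refine ⟨hx₀, maxMulVec B (u 1), ⟨u 1, rfl⟩, ?_⟩
  rw [← hrec 0]
  exact ⟨fun k => u (k + 1), fun k => x (k + 1), rfl, fun k => hrec (k + 1), fun k => hK (k + 1)⟩

theorem kstarMax_subset_xseqMax (K : Set (Fin n → WithBot ℤ)) :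
    ∀ r, KstarMax A B K ⊆ XseqMax A B K r
  | 0 => kstarMax_subset A B K
  | r + 1 => (kstarMax_subset_phiMax A B K).trans (phiMax_mono A B (kstarMax_subset_xseqMax K r))

/-- `X ⊆ φ(X)` says that `X` is geometrically `(A,B)`-invariant. -/
theorem subset_kstarMax {X K : Set (Fin n → WithBot ℤ)} (hXK : X ⊆ K)
    (hX : X ⊆ PhiMax A B X) : X ⊆ KstarMax A B K := by
  intro a ha
  have hstep : ∀ v : X, ∃ w : Fin p → WithBot ℤ, maxMulVec A v ⊔ maxMulVec B w ∈ X := by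
    rintro ⟨v, hv⟩
    obtain ⟨-, -, ⟨w, rfl⟩, hw⟩ := hX hv
    exact ⟨w, hw⟩
  choose w hw using hstep
  let traj : ℕ → X := fun k => Nat.rec ⟨a, ha⟩ (fun _ v => ⟨_, hw v⟩) k
  exact ⟨fun k => w (traj (k - 1)), fun k => (traj k).1, rfl, fun k => rfl,
    fun k => hXK (traj k).2⟩

end Invariance

noncomputable def normalizedBox (ι : Type*) [Fintype ι] [DecidableEq ι] (d : ℕ) :
    Finset (ι → ℤ) :=
  Fintype.piFinset (fun _ => Icc (-d : ℤ) 0) \ Fintype.piFinset fun _ => Icc (-d : ℤ) (-1)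

theorem card_normalizedBox (ι : Type*) [Fintype ι] [DecidableEq ι] (d : ℕ) :
    (normalizedBox ι d).card = (d + 1) ^ Fintype.card ι - d ^ Fintype.card ι := by
  have hsub : (Fintype.piFinset fun _ : ι => Icc (-d : ℤ) (-1)) ⊆
      Fintype.piFinset fun _ => Icc (-d : ℤ) 0 :=
    Fintype.piFinset_subset _ _ fun _ => Icc_subset_Icc le_rfl (by omega)
  rw [normalizedBox, card_sdiff_of_subset hsub, Fintype.card_piFinset, Fintype.card_piFinset]
  simp only [Int.card_Icc, prod_const, card_univ]
  congr 2 <;> omega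

theorem mem_image_normalizedBox {ι : Type*} [Fintype ι] [DecidableEq ι] {x : ι → WithBot ℤ}
    {d : ℕ} (hsup : univ.sup x = 0) (hd : ∀ i, 0 ≤ ((d : ℤ) : WithBot ℤ) + x i) :
    x ∈ (fun z i => (z i : WithBot ℤ)) '' (normalizedBox ι d : Set (ι → ℤ)) := by
  have hfin : ∀ i, ∃ z : ℤ, x i = z ∧ -(d : ℤ) ≤ z ∧ z ≤ 0 := by
    intro i
    have hle : x i ≤ 0 := hsup ▸ le_sup (mem_univ i)
    cases hxi : x i with
    | bot => simpa [hxi] using hd i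
    | coe z =>
      rw [hxi] at hle
      have := hd i
      rw [hxi, ← WithBot.coe_add] at this
      exact ⟨z, rfl, by have := WithBot.coe_le_coe.1 this; omega, WithBot.coe_le_coe.1 hle⟩
  choose z hz using hfin
  have hne : (univ : Finset ι).Nonempty :=
    nonempty_iff_ne_empty.2 fun h => by simp [h] at hsup
  obtain ⟨i₀, -, hi₀⟩ := exists_mem_eq_sup univ hne x
  refine ⟨z, ?_, funext fun i => (hz i).1.symm⟩
  simp only [normalizedBox, coe_sdiff, Set.mem_sdiff, mem_coe, Fintype.mem_piFinset, mem_Icc]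
  refine ⟨fun i => (hz i).2, fun h => ?_⟩
  have : z i₀ = 0 := by exact_mod_cast ((hz i₀).1.symm.trans hi₀.symm).trans hsup
  exact absurd (h i₀).2 (by omega)

section FiniteMatrix

variable {n s : ℕ} [NeZero n] [NeZero s] (K : Matrix (Fin n) (Fin s) ℤ)

theorem le_deltaH_add (i i' : Fin n) (j : Fin s) : K i' j ≤ deltaH K + K i j := by
  have hmax := le_sup' (fun i => K i j) (mem_univ i')
  have hmin := inf'_le (fun i => K i j) (mem_univ i)
  have hcol : hilbertNorm (fun i => K i j) ≤ deltaH K :=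
    le_sup' (fun j => hilbertNorm fun i => K i j) (mem_univ j)
  have := Int.self_le_toNat
    (univ.sup' univ_nonempty (fun i => K i j) - univ.inf' univ_nonempty fun i => K i j)
  rw [hilbertNorm] at hcol
  omega

theorem maxMulVec_toZmax_le (y : Fin s → WithBot ℤ) (i i' : Fin n) :
    maxMulVec (toZmax K) y i' ≤ ((deltaH K : ℤ) : WithBot ℤ) + maxMulVec (toZmax K) y i := by
  refine Finset.sup_le fun j _ => ?_
  calc toZmax K i' j + y j ≤ ((deltaH K + K i j : ℤ) : WithBot ℤ) + y j := by
        gcongr; exact WithBot.coe_le_coe.2 (le_deltaH_add K i i' j)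
    _ = ((deltaH K : ℤ) : WithBot ℤ) + (toZmax K i j + y j) := by
        simp [toZmax, add_assoc]
    _ ≤ _ := by gcongr; exact le_sup (f := fun j => toZmax K i j + y j) (mem_univ j)

theorem vol_imM_toZmax_le : vol (ImM (toZmax K)) ≤ ((deltaH K + 1) ^ n - deltaH K ^ n : ℕ) := by
  have hsub : normalizedPart (ImM (toZmax K)) ⊆
      (fun z i => (z i : WithBot ℤ)) '' (normalizedBox (Fin n) (deltaH K) : Set (Fin n → ℤ)) := by
    rintro _ ⟨⟨y, rfl⟩, hsup⟩
    obtain ⟨i₀, -, hi₀⟩ := exists_mem_eq_sup univ univ_nonempty (maxMulVec (toZmax K) y)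
    exact mem_image_normalizedBox hsup fun i =>
      (hsup.symm.trans hi₀).le.trans (maxMulVec_toZmax_le K y i i₀)
  calc vol (ImM (toZmax K)) ≤ (normalizedBox (Fin n) (deltaH K) : Set (Fin n → ℤ)).encard :=
        (Set.encard_le_encard hsub).trans (Set.encard_image_le _ _)
    _ = _ := by rw [Set.encard_coe_eq_coe_finsetCard, card_normalizedBox, Fintype.card_fin]

end FiniteMatrix

theorem Set.exists_le_succ_eq_of_antitone {α : Type*} {S : ℕ → Set α} (hS : Antitone S)
    {M : ℕ} (hM : (S 0).encard ≤ M) : ∃ r ≤ M, S (r + 1) = S r := by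
  by_contra! hne
  have hfin : ∀ r, (S r).Finite :=
    fun r => (Set.finite_of_encard_le_coe hM).subset (hS r.zero_le)
  have hdecr : ∀ r ≤ M + 1, (S r).ncard + r ≤ (S 0).ncard := by
    intro r
    induction r with
    | zero => simp
    | succ r ih =>
      intro hr
      have : (S (r + 1)).ncard < (S r).ncard :=
        Set.ncard_lt_ncard ((hS r.le_succ).ssubset_of_ne (hne r (by omega))) (hfin r)
      have := ih (by omega)
      omega
  have h0 : (S 0).ncard ≤ M := by exact_mod_cast (hfin 0).cast_ncard_eq ▸ hM
  have := hdecr (M + 1) le_rfl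
  omega

/-- Let `K ∈ ℤ^{n×s}` have all entries finite, let `𝒦 = Im K ⊆ ℤ_max^n`, and let
`A ∈ ℤ_max^{n×n}`, `B ∈ ℤ_max^{n×p}`. Then the maximal geometrically `(A,B)`-invariant
semimodule `𝒦*` contained in `𝒦` is finitely generated and, with `X₁ = 𝒦`,
`X_{r+1} = φ(X_r)`, there exists `k ≤ (Δ_H(K)+1)^n − Δ_H(K)^n + 1` with `𝒦* = X_k`. -/
theorem kstar_of_finite_matrix {n s p : ℕ} [NeZero n] [NeZero s]
    (K : Matrix (Fin n) (Fin s) ℤ)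
    (A : Matrix (Fin n) (Fin n) (WithBot ℤ)) (B : Matrix (Fin n) (Fin p) (WithBot ℤ)) :
    (∃ G : Set (Fin n → WithBot ℤ), G.Finite ∧
      KstarMax A B (ImM (toZmax K)) = maxSpan G) ∧
    ∃ k : ℕ, 1 ≤ k ∧ k ≤ (deltaH K + 1) ^ n - deltaH K ^ n + 1 ∧
      KstarMax A B (ImM (toZmax K)) = XseqMax A B (ImM (toZmax K)) (k - 1) := by
  set X := XseqMax A B (ImM (toZmax K))
  have hX := (isSubsemimodule_imM (toZmax K)).xseqMax A B
  have hvol : (normalizedPart (X 0)).encard ≤ _ := vol_imM_toZmax_le K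
  obtain ⟨r, hrM, hstable : normalizedPart (X (r + 1)) = normalizedPart (X r)⟩ :=
    Set.exists_le_succ_eq_of_antitone
      (normalizedPart_mono.comp_antitone (xseqMax_antitone A B _)) hvol
  have hfix : X r ⊆ PhiMax A B (X r) :=
    (hX r).subset_of_normalizedPart_subset (hX (r + 1))
      (hstable.symm.subset.trans (Set.sep_subset _ _))
  have hKstar : KstarMax A B (ImM (toZmax K)) = X r :=
    (kstarMax_subset_xseqMax A B _ r).antisymm
      (subset_kstarMax A B (xseqMax_subset A B _ r) hfix)
  refine ⟨⟨normalizedPart (X r), ?_, hKstar.trans (hX r).eq_maxSpan_normalizedPart⟩,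
    r + 1, by omega, by omega, hKstar⟩
  exact (Set.finite_of_encard_le_coe hvol).subset
    (normalizedPart_mono (xseqMax_subset A B _ r))
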